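/- arXiv:2511.13038 — 2 statements merged into one kernel-verified Lean document; each statement's English description precedes it below -/
import Mathlib

section
/- Let 0 < α < 1 and let ρ : [0,∞) → ℂ be continuously differentiable. If ρ satisfies the Volterra integral equation ρ(t) = ρ(0) + (1/Γ(α)) ∫₀ᵗ (t−τ)^{α−1} L(ρ(τ)) dτ for a continuous linear map L, then the Caputo derivative of ρ satisfies ⁰D_t^α ρ(t) = L(ρ(t)) for all t > 0, where ⁰D_t^α ρ(t) = (1/Γ(1−α)) ∫₀ᵗ (t−τ)^{−α} ρ'(τ) dτ. -/
/-!
Write `Iᵃ` for the Riemann–Liouville integral `Iᵃ f t = Γ(a)⁻¹ ∫₀ᵗ (t - τ)^(a-1) f τ dτ`.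
The Volterra equation says `ρ - ρ 0 = I^α (L ∘ ρ)`, the fundamental theorem of calculus says
`ρ - ρ 0 = I¹ ρ'`, and the Caputo derivative is `I^(1-α) ρ'`. The semigroup law
`Iᵃ Iᵇ = I^(a+b)`, which is Fubini on the triangle `0 < s ≤ τ ≤ t` together with the Beta
integral, gives `I¹ (I^(1-α) ρ') = I^(1-α) (I¹ ρ') = I^(1-α) (I^α (L ∘ ρ)) = I¹ (L ∘ ρ)`.
Both `I^(1-α) ρ'` and `L ∘ ρ` are continuous on `[0, ∞)`, so differentiating gives the claim.
-/

open MeasureTheory Set Function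

theorem intervalIntegrable_sub_rpow {r : ℝ} (hr : -1 < r) (c u v : ℝ) :
    IntervalIntegrable (fun x => (c - x) ^ r) volume u v := by
  simpa using
    (intervalIntegral.intervalIntegrable_rpow' hr (a := c - u) (b := c - v)).comp_sub_left c

theorem integral_sub_rpow_mul_sub_rpow {a b s t : ℝ} (ha : 0 < a) (hb : 0 < b) (hst : s < t) :
    ∫ τ in s..t, (t - τ) ^ (a - 1) * (τ - s) ^ (b - 1) =
      ProbabilityTheory.beta a b * (t - s) ^ (a + b - 1) := by
  have hc : 0 < t - s := sub_pos.2 hst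
  have hshift := intervalIntegral.integral_comp_sub_right
    (fun x => (t - s - x) ^ (a - 1) * x ^ (b - 1)) s (a := s) (b := t)
  simp only [sub_self, sub_sub_sub_cancel_right] at hshift
  rw [hshift]
  apply Complex.ofReal_injective
  have hscaled := Complex.betaIntegral_scaled b a hc
  rw [Complex.betaIntegral_eq_Gamma_mul_div _ _ (by simpa) (by simpa)] at hscaled
  rw [← intervalIntegral.integral_ofReal]
  convert hscaled using 1
  · refine intervalIntegral.integral_congr fun x hx => ?_
    rw [uIcc_of_le hc.le] at hx
    push_cast [Complex.ofReal_cpow hx.1, Complex.ofReal_cpow (sub_nonneg.2 hx.2)]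
    ring
  · rw [ProbabilityTheory.beta, ← Complex.ofReal_add, Complex.Gamma_ofReal, Complex.Gamma_ofReal,
      Complex.Gamma_ofReal, add_comm b a]
    push_cast [Complex.ofReal_cpow hc.le]
    ring

def triangle (t : ℝ) : Set (ℝ × ℝ) := {p | 0 < p.2 ∧ p.2 ≤ p.1 ∧ p.1 ≤ t}

theorem measurableSet_triangle (t : ℝ) : MeasurableSet (triangle t) :=
  (measurableSet_lt measurable_const measurable_snd).inter
    ((measurableSet_le measurable_snd measurable_fst).inter
      (measurableSet_le measurable_fst measurable_const))

/-- The shear `(τ, s) ↦ (τ, s - τ)` maps the triangle into a rectangle, on which the kernel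
becomes a product of two integrable powers. -/
theorem integrableOn_triangle_sub_rpow_mul_sub_rpow {a b : ℝ} (ha : 0 < a) (hb : 0 < b) (t : ℝ) :
    IntegrableOn (fun p : ℝ × ℝ => (t - p.1) ^ (a - 1) * (p.1 - p.2) ^ (b - 1)) (triangle t) := by
  have hshear : MeasurePreserving (fun p : ℝ × ℝ => (p.1, p.2 - p.1)) := by
    simpa only [Measure.volume_eq_prod] using measurePreserving_prod_sub volume volume
  have hsquare : IntegrableOn (fun q : ℝ × ℝ => (t - q.1) ^ (a - 1) * (0 - q.2) ^ (b - 1))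
      (Ioc 0 t ×ˢ Ioc (-t) 0) := by
    rw [IntegrableOn, Measure.volume_eq_prod, ← Measure.prod_restrict]
    exact ((intervalIntegrable_sub_rpow (by linarith) t 0 t).1).mul_prod
      (intervalIntegrable_sub_rpow (by linarith) 0 (-t) 0).1
  have hpre := (hshear.integrableOn_comp_preimage
    (MeasurableEquiv.shearSubRight ℝ).measurableEmbedding).2 hsquare
  refine (hpre.mono_set ?_).congr_fun (fun p _ => ?_) (measurableSet_triangle t)
  · rintro ⟨τ, s⟩ ⟨hs, hsτ, hτt⟩
    simp only [mem_preimage, mem_prod, mem_Ioc]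
    constructor <;> constructor <;> linarith
  · simp

section

variable {E : Type*} [NormedAddCommGroup E] [NormedSpace ℝ E]

theorem integral_integral_swap_triangle {F : ℝ → ℝ → E} {t : ℝ} (ht : 0 ≤ t)
    (hF : IntegrableOn (uncurry F) (triangle t)) :
    ∫ τ in (0:ℝ)..t, ∫ s in (0:ℝ)..τ, F τ s = ∫ s in (0:ℝ)..t, ∫ τ in s..t, F τ s := by
  set μ := volume.restrict (Ioc (0:ℝ) t)
  set K : ℝ → ℝ → E := fun τ => (Ioc 0 τ).indicator (F τ)
  have hK : Integrable (uncurry K) (μ.prod μ) := by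
    have hS : MeasurableSet {p : ℝ × ℝ | p.2 ∈ Ioc 0 p.1} :=
      (measurableSet_lt measurable_const measurable_snd).inter
        (measurableSet_le measurable_snd measurable_fst)
    have hKS : uncurry K = {p : ℝ × ℝ | p.2 ∈ Ioc 0 p.1}.indicator (uncurry F) := by
      ext ⟨τ, s⟩; simp [K, indicator_apply]
    have hST : {p : ℝ × ℝ | p.2 ∈ Ioc 0 p.1} ∩ Ioc 0 t ×ˢ Ioc 0 t = triangle t := by
      ext ⟨τ, s⟩; simp only [triangle, mem_inter_iff, mem_ofPred_eq, mem_prod, mem_Ioc]; grind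
    rwa [hKS, Measure.prod_restrict, ← Measure.volume_eq_prod, integrable_indicator_iff hS,
      IntegrableOn, Measure.restrict_restrict hS, hST]
  have hleft : ∀ τ ∈ Ioc 0 t, ∫ s, K τ s ∂μ = ∫ s in (0:ℝ)..τ, F τ s := by
    intro τ hτ
    rw [integral_indicator measurableSet_Ioc, Measure.restrict_restrict measurableSet_Ioc,
      Ioc_inter_Ioc, max_self, min_eq_left hτ.2, intervalIntegral.integral_of_le hτ.1.le]
  have hright : ∀ s ∈ Ioc 0 t, ∫ τ, K τ s ∂μ = ∫ τ in s..t, F τ s := by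
    intro s hs
    have hslice : (fun τ => K τ s) = (Ici s).indicator (fun τ => F τ s) := by
      ext τ; simp [K, indicator_apply, hs.1]
    have hIcc : Ici s ∩ Ioc 0 t = Icc s t := by
      ext τ; simp only [mem_inter_iff, mem_Ici, mem_Ioc, mem_Icc]; grind [hs.1]
    rw [hslice, integral_indicator measurableSet_Ici, Measure.restrict_restrict measurableSet_Ici,
      hIcc, integral_Icc_eq_integral_Ioc, intervalIntegral.integral_of_le hs.2]
  calc ∫ τ in (0:ℝ)..t, ∫ s in (0:ℝ)..τ, F τ s = ∫ τ, ∫ s, K τ s ∂μ ∂μ := by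
        rw [intervalIntegral.integral_of_le ht]
        exact setIntegral_congr_fun measurableSet_Ioc fun τ hτ => (hleft τ hτ).symm
    _ = ∫ s, ∫ τ, K τ s ∂μ ∂μ := integral_integral_swap hK
    _ = ∫ s in (0:ℝ)..t, ∫ τ in s..t, F τ s := by
        rw [intervalIntegral.integral_of_le ht]
        exact setIntegral_congr_fun measurableSet_Ioc hright

theorem integral_sub_rpow_smul_integral_sub_rpow_smul [CompleteSpace E] {a b t : ℝ} (ha : 0 < a)
    (hb : 0 < b) (ht : 0 ≤ t) {f : ℝ → E} (hf : ContinuousOn f (Icc 0 t)) :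
    ∫ τ in (0:ℝ)..t, (t - τ) ^ (a - 1) • ∫ s in (0:ℝ)..τ, (τ - s) ^ (b - 1) • f s =
      ProbabilityTheory.beta a b • ∫ s in (0:ℝ)..t, (t - s) ^ (a + b - 1) • f s := by
  obtain ⟨M, hM⟩ := isCompact_Icc.exists_bound_of_continuousOn hf
  set F : ℝ → ℝ → E := fun τ s => ((t - τ) ^ (a - 1) * (τ - s) ^ (b - 1)) • f s
  have hF : IntegrableOn (uncurry F) (triangle t) := by
    refine ((integrableOn_triangle_sub_rpow_mul_sub_rpow ha hb t).mul_const M).mono' ?_ ?_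
    · have hfs : ContinuousOn (fun p : ℝ × ℝ => f p.2) (triangle t) :=
        hf.comp continuousOn_snd fun p hp => ⟨hp.1.le, hp.2.1.trans hp.2.2⟩
      have hk : Measurable fun p : ℝ × ℝ => (t - p.1) ^ (a - 1) * (p.1 - p.2) ^ (b - 1) := by
        fun_prop
      exact hk.aestronglyMeasurable.smul (hfs.aestronglyMeasurable (measurableSet_triangle t))
    · refine ae_restrict_of_forall_mem (measurableSet_triangle t) fun p hp => ?_
      have hk : 0 ≤ (t - p.1) ^ (a - 1) * (p.1 - p.2) ^ (b - 1) :=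
        mul_nonneg (Real.rpow_nonneg (by linarith [hp.2.2]) _)
          (Real.rpow_nonneg (by linarith [hp.2.1]) _)
      rw [uncurry_apply_pair, norm_smul, Real.norm_of_nonneg hk]
      exact mul_le_mul_of_nonneg_left (hM _ ⟨hp.1.le, hp.2.1.trans hp.2.2⟩) hk
  calc ∫ τ in (0:ℝ)..t, (t - τ) ^ (a - 1) • ∫ s in (0:ℝ)..τ, (τ - s) ^ (b - 1) • f s
        = ∫ τ in (0:ℝ)..t, ∫ s in (0:ℝ)..τ, F τ s := by
          simp only [F, ← intervalIntegral.integral_smul, smul_smul]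
    _ = ∫ s in (0:ℝ)..t, ∫ τ in s..t, F τ s := integral_integral_swap_triangle ht hF
    _ = ∫ s in (0:ℝ)..t, ProbabilityTheory.beta a b • (t - s) ^ (a + b - 1) • f s := by
          rw [intervalIntegral.integral_of_le ht, intervalIntegral.integral_of_le ht,
            integral_Ioc_eq_integral_Ioo, integral_Ioc_eq_integral_Ioo]
          refine setIntegral_congr_fun measurableSet_Ioo fun s hs => ?_
          rw [intervalIntegral.integral_smul_const, integral_sub_rpow_mul_sub_rpow ha hb hs.2,
            smul_smul]
    _ = ProbabilityTheory.beta a b • ∫ s in (0:ℝ)..t, (t - s) ^ (a + b - 1) • f s :=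
          intervalIntegral.integral_smul _ _

noncomputable def riemannLiouville (a : ℝ) (f : ℝ → E) (t : ℝ) : E :=
  (Real.Gamma a)⁻¹ • ∫ τ in (0:ℝ)..t, (t - τ) ^ (a - 1) • f τ

theorem riemannLiouville_one (f : ℝ → E) (t : ℝ) :
    riemannLiouville 1 f t = ∫ τ in (0:ℝ)..t, f τ := by
  simp [riemannLiouville]

theorem riemannLiouville_congr {a t : ℝ} {f g : ℝ → E} (hfg : EqOn f g (uIcc 0 t)) :
    riemannLiouville a f t = riemannLiouville a g t := by
  rw [riemannLiouville, riemannLiouville,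
    intervalIntegral.integral_congr fun τ hτ => congrArg _ (hfg hτ)]

theorem riemannLiouville_riemannLiouville [CompleteSpace E] {a b t : ℝ} (ha : 0 < a) (hb : 0 < b)
    (ht : 0 ≤ t) {f : ℝ → E} (hf : ContinuousOn f (Icc 0 t)) :
    riemannLiouville a (riemannLiouville b f) t = riemannLiouville (a + b) f t := by
  have hΓa := (Real.Gamma_pos_of_pos ha).ne'
  have hΓb := (Real.Gamma_pos_of_pos hb).ne'
  have hΓab := (Real.Gamma_pos_of_pos (add_pos ha hb)).ne'
  calc riemannLiouville a (riemannLiouville b f) t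
      = (Real.Gamma a)⁻¹ • (Real.Gamma b)⁻¹ •
          ∫ τ in (0:ℝ)..t, (t - τ) ^ (a - 1) • ∫ s in (0:ℝ)..τ, (τ - s) ^ (b - 1) • f s := by
        simp only [riemannLiouville, smul_comm _ (Real.Gamma b)⁻¹, intervalIntegral.integral_smul]
    _ = riemannLiouville (a + b) f t := by
        rw [integral_sub_rpow_smul_integral_sub_rpow_smul ha hb ht hf, smul_smul, smul_smul,
          riemannLiouville, ProbabilityTheory.beta]
        congr 1
        field_simp

theorem riemannLiouville_eq_rpow_smul {a u : ℝ} (ha : 0 < a) (hu : 0 ≤ u) (f : ℝ → E) :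
    riemannLiouville a f u =
      ((Real.Gamma a)⁻¹ * u ^ a) • ∫ x in (0:ℝ)..1, (1 - x) ^ (a - 1) • f (u * x) := by
  have hsub : ∀ x ∈ uIcc (0:ℝ) 1, (u - u * x) ^ (a - 1) • f (u * x) =
      u ^ (a - 1) • (1 - x) ^ (a - 1) • f (u * x) := by
    intro x hx
    rw [uIcc_of_le zero_le_one] at hx
    rw [smul_smul, ← Real.mul_rpow hu (by linarith [hx.2]), mul_sub, mul_one]
  have hscale := intervalIntegral.smul_integral_comp_mul_left
    (fun τ => (u - τ) ^ (a - 1) • f τ) u (a := 0) (b := 1)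
  rw [mul_zero, mul_one] at hscale
  rw [riemannLiouville, ← hscale, intervalIntegral.integral_congr hsub,
    intervalIntegral.integral_smul, smul_smul, smul_smul, mul_assoc,
    ← Real.rpow_one_add' hu (by linarith), add_sub_cancel]

theorem continuousOn_riemannLiouville {a : ℝ} (ha : 0 < a) {f : ℝ → E}
    (hf : ContinuousOn f (Ici 0)) : ContinuousOn (riemannLiouville a f) (Ici 0) := by
  have hmaps : ∀ {u : ℝ}, u ∈ Ici 0 → MapsTo (fun x => u * x) (uIoc 0 1) (Ici 0) :=
    fun hu x hx => by
      rw [uIoc_of_le zero_le_one] at hx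
      exact mul_nonneg (mem_Ici.1 hu) hx.1.le
  -- after the substitution `τ = u * x` the singular factor no longer depends on `u`
  have hJ : ContinuousOn (fun u => ∫ x in (0:ℝ)..1, (1 - x) ^ (a - 1) • f (u * x)) (Ici 0) := by
    intro u₀ hu₀
    obtain ⟨M, hM⟩ := isCompact_Icc.exists_bound_of_continuousOn
      (hf.mono (Icc_subset_Ici_self : Icc 0 (u₀ + 1) ⊆ Ici 0))
    refine intervalIntegral.continuousWithinAt_of_dominated_interval
      (bound := fun x => (1 - x) ^ (a - 1) * M) ?_ ?_
      ((intervalIntegrable_sub_rpow (by linarith) 1 0 1).mul_const M) ?_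
    · filter_upwards [self_mem_nhdsWithin] with u hu
      exact (by fun_prop : Measurable fun x : ℝ => (1 - x) ^ (a - 1)).aestronglyMeasurable.smul
        ((hf.comp (continuousOn_const.mul continuousOn_id) (hmaps hu)).aestronglyMeasurable
          measurableSet_uIoc)
    · filter_upwards [self_mem_nhdsWithin, nhdsWithin_le_nhds (Iio_mem_nhds (lt_add_one u₀))]
        with u hu hu'
      refine ae_of_all _ fun x hx => ?_
      rw [uIoc_of_le zero_le_one] at hx
      have hk : 0 ≤ (1 - x) ^ (a - 1) := Real.rpow_nonneg (by linarith [hx.2]) _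
      rw [norm_smul, Real.norm_of_nonneg hk]
      refine mul_le_mul_of_nonneg_left (hM _ ⟨mul_nonneg hu hx.1.le, ?_⟩) hk
      linarith [mul_le_of_le_one_right hu hx.2, mem_Iio.1 hu']
    · refine ae_of_all _ fun x hx => continuousWithinAt_const.smul ?_
      exact ContinuousWithinAt.comp (f := fun u => u * x) (hf (u₀ * x) (hmaps hu₀ hx))
        (continuous_mul_const x).continuousWithinAt fun u hu => hmaps hu hx
  have hpow : ContinuousOn (fun u : ℝ => (Real.Gamma a)⁻¹ * u ^ a) (Ici 0) :=
    continuousOn_const.mul (continuousOn_id.rpow_const fun _ _ => Or.inr ha.le)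
  exact (hpow.smul hJ).congr fun u hu => riemannLiouville_eq_rpow_smul ha hu f

theorem eqOn_Ioi_of_forall_integral_eq [CompleteSpace E] {h k : ℝ → E}
    (hh : ContinuousOn h (Ici 0)) (hk : ContinuousOn k (Ici 0))
    (hhk : ∀ u > 0, ∫ τ in (0:ℝ)..u, h τ = ∫ τ in (0:ℝ)..u, k τ) : EqOn h k (Ioi 0) := by
  intro t ht
  have hderiv : ∀ φ : ℝ → E, ContinuousOn φ (Ici 0) →
      HasDerivAt (fun u => ∫ τ in (0:ℝ)..u, φ τ) (φ t) t := fun φ hφ =>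
    intervalIntegral.integral_hasDerivAt_right
      (hφ.mono (by rw [uIcc_of_le ht.le]; exact Icc_subset_Ici_self)).intervalIntegrable
      ((hφ.mono Ioi_subset_Ici_self).stronglyMeasurableAtFilter isOpen_Ioi t ht)
      (hφ.continuousAt (Ici_mem_nhds ht))
  refine (hderiv h hh).unique ((hderiv k hk).congr_of_eventuallyEq ?_)
  filter_upwards [Ioi_mem_nhds ht] with u hu using hhk u hu

end

/-- If a `C¹` function `ρ : [0,∞) → ℂ` satisfies the Volterra integral equation
`ρ t = ρ 0 + (1/Γ α) ∫₀ᵗ (t-τ)^(α-1) L(ρ τ) dτ` for a continuous linear map `L` and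
`0 < α < 1`, then its Caputo derivative satisfies `ᶜD^α ρ t = L (ρ t)` for all `t > 0`. -/
theorem caputo_of_volterra (α : ℝ) (hα : 0 < α) (hα1 : α < 1)
    (ρ ρ' : ℝ → ℂ) (L : ℂ →L[ℂ] ℂ)
    (hderiv : ∀ t, 0 ≤ t → HasDerivAt ρ (ρ' t) t)
    (hcont : ContinuousOn ρ' (Set.Ici 0))
    (hvolterra : ∀ t, 0 ≤ t →
      ρ t = ρ 0 + (1 / Real.Gamma α) •
        ∫ τ in (0:ℝ)..t, ((t - τ) ^ (α - 1) : ℝ) • L (ρ τ)) :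
    ∀ t, 0 < t →
      (1 / Real.Gamma (1 - α)) •
        (∫ τ in (0:ℝ)..t, ((t - τ) ^ (-α) : ℝ) • ρ' τ) = L (ρ t) := by
  have h1α : 0 < 1 - α := sub_pos.2 hα1
  have huIcc : ∀ {u : ℝ}, 0 ≤ u → uIcc 0 u ⊆ Ici 0 := fun hu => by
    rw [uIcc_of_le hu]; exact Icc_subset_Ici_self
  set g : ℝ → ℂ := fun τ => L (ρ τ)
  have hg : ContinuousOn g (Ici 0) :=
    L.continuous.comp_continuousOn fun x hx => (hderiv x hx).continuousAt.continuousWithinAt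
  have hftc : ∀ u ≥ 0, riemannLiouville 1 ρ' u = ρ u - ρ 0 := fun u hu => by
    rw [riemannLiouville_one]
    exact intervalIntegral.integral_eq_sub_of_hasDerivAt (fun x hx => hderiv x (huIcc hu hx))
      (hcont.mono (huIcc hu)).intervalIntegrable
  have hvol : ∀ u ≥ 0, riemannLiouville α g u = ρ u - ρ 0 := fun u hu => by
    rw [hvolterra u hu, add_sub_cancel_left, riemannLiouville, one_div]
  have hprim : ∀ u > 0, ∫ τ in (0:ℝ)..u, riemannLiouville (1 - α) ρ' τ = ∫ τ in (0:ℝ)..u, g τ := by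
    intro u hu
    have hρ' : ContinuousOn ρ' (Icc 0 u) := hcont.mono Icc_subset_Ici_self
    calc ∫ τ in (0:ℝ)..u, riemannLiouville (1 - α) ρ' τ
        = riemannLiouville 1 (riemannLiouville (1 - α) ρ') u := (riemannLiouville_one _ _).symm
      _ = riemannLiouville (1 - α) (riemannLiouville 1 ρ') u := by
        rw [riemannLiouville_riemannLiouville one_pos h1α hu.le hρ',
          riemannLiouville_riemannLiouville h1α one_pos hu.le hρ', add_comm]
      _ = riemannLiouville (1 - α) (riemannLiouville α g) u :=
        riemannLiouville_congr fun τ hτ =>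
          (hftc τ (huIcc hu.le hτ)).trans (hvol τ (huIcc hu.le hτ)).symm
      _ = riemannLiouville 1 g u := by
        rw [riemannLiouville_riemannLiouville h1α hα hu.le (hg.mono Icc_subset_Ici_self),
          sub_add_cancel]
      _ = ∫ τ in (0:ℝ)..u, g τ := riemannLiouville_one _ _
  intro t ht
  rw [one_div, ← sub_sub_cancel_left 1 α]
  exact eqOn_Ioi_of_forall_integral_eq (continuousOn_riemannLiouville h1α hcont) hg hprim ht
end

section
/- For Re(s) > 0, α > 0, and λ ∈ ℂ with |λ| < Re(s)^α, the Laplace transform of t ↦ E_α(λ t^α) equals s^{α−1}/(s^α − λ), i.e., ∫₀^∞ e^{−st} E_α(λ t^α) dt = s^{α−1}/(s^α − λ). -/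
/-!
Expanding `E_α(λ t^α) = ∑ λⁿ t^{αn} / Γ(αn + 1)` and integrating termwise, the `n`-th term
contributes `λⁿ / s^{αn+1}` because `∫₀^∞ e^{-st} t^b dt = Γ(b + 1) / s^{b+1}`. For real `s > 0`
this is the Gamma integral; for complex `s` it follows by analytic continuation, both sides being
holomorphic on `Re s > 0`. The integrals of the absolute values of the terms form the geometric
series `∑ (‖λ‖ / (Re s)^α)ⁿ / Re s`, which converges, so termwise integration is legitimate, and
the terms `(λ / s^α)ⁿ / s` sum to `s^{α-1} / (s^α - λ)`.
-/

open MeasureTheory Set Complex Filter Topology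

noncomputable def mittagLeffler (α : ℝ) (z : ℂ) : ℂ :=
  ∑' n : ℕ, z ^ n / Complex.Gamma (α * n + 1)

noncomputable def laplace (f : ℝ → ℂ) (s : ℂ) : ℂ :=
  ∫ t in Ioi (0 : ℝ), cexp (-s * t) * f t

lemma norm_cexp_neg_mul_mul_rpow (s : ℂ) {t : ℝ} (ht : 0 ≤ t) (b : ℝ) :
    ‖cexp (-s * t) * ((t ^ b : ℝ) : ℂ)‖ = Real.exp (-s.re * t) * t ^ b := by
  simp [Complex.norm_exp, abs_of_nonneg (Real.rpow_nonneg ht b)]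

lemma integrableOn_cexp_neg_mul_mul_rpow {b : ℝ} (hb : -1 < b) {s : ℂ} (hs : 0 < s.re) :
    IntegrableOn (fun t : ℝ ↦ cexp (-s * t) * ((t ^ b : ℝ) : ℂ)) (Ioi 0) := by
  refine Integrable.mono' (g := fun t ↦ Real.exp (-s.re * t) * t ^ b) ?_
    (by fun_prop : Measurable _).aestronglyMeasurable ?_
  · simpa [mul_comm, IntegrableOn] using integrableOn_rpow_mul_exp_neg_mul_rpow hb one_pos hs
  · filter_upwards [ae_restrict_mem measurableSet_Ioi] with t ht
    exact (norm_cexp_neg_mul_mul_rpow s (le_of_lt ht) b).le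

lemma hasDerivAt_cexp_neg_mul_mul_rpow {t : ℝ} (ht : 0 < t) (b : ℝ) (s : ℂ) :
    HasDerivAt (fun z : ℂ ↦ cexp (-z * t) * ((t ^ b : ℝ) : ℂ))
      (-(cexp (-s * t) * ((t ^ (b + 1) : ℝ) : ℂ))) s := by
  have h : HasDerivAt (fun z : ℂ ↦ -z * t) (-t) s := by
    simpa using (hasDerivAt_neg s).mul_const (t : ℂ)
  refine (h.cexp.mul_const _).congr_deriv ?_
  rw [Real.rpow_add_one ht.ne', Complex.ofReal_mul]
  ring

lemma differentiableOn_laplace_rpow {b : ℝ} (hb : -1 < b) :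
    DifferentiableOn ℂ (laplace fun t ↦ ((t ^ b : ℝ) : ℂ)) {s | 0 < s.re} := by
  intro s₀ hs₀
  obtain ⟨ε, hε, hεs₀⟩ : ∃ ε, 0 < ε ∧ ε < s₀.re := ⟨s₀.re / 2, by simp_all, by simp_all⟩
  have hnhds : {z : ℂ | ε < z.re} ∈ 𝓝 s₀ :=
    (isOpen_lt continuous_const continuous_re).mem_nhds hεs₀
  refine (hasDerivAt_integral_of_dominated_loc_of_deriv_le hnhds
    (F := fun z t ↦ cexp (-z * t) * ((t ^ b : ℝ) : ℂ))
    (F' := fun z t ↦ -(cexp (-z * t) * ((t ^ (b + 1) : ℝ) : ℂ)))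
    (bound := fun t ↦ Real.exp (-ε * t) * t ^ (b + 1))
    (.of_forall fun z ↦ (by fun_prop : Measurable _).aestronglyMeasurable)
    (integrableOn_cexp_neg_mul_mul_rpow hb hs₀)
    (by fun_prop : Measurable _).aestronglyMeasurable
    ?_ ?_ ?_).2.differentiableAt.differentiableWithinAt
  · filter_upwards [ae_restrict_mem measurableSet_Ioi] with t ht z hz
    rw [norm_neg, norm_cexp_neg_mul_mul_rpow z (le_of_lt ht)]
    have ht : 0 ≤ t := le_of_lt ht
    have hz : ε ≤ z.re := le_of_lt hz
    gcongr
  · simpa [mul_comm, IntegrableOn] using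
      integrableOn_rpow_mul_exp_neg_mul_rpow (by linarith) one_pos hε
  · filter_upwards [ae_restrict_mem measurableSet_Ioi] with t ht z _
    exact hasDerivAt_cexp_neg_mul_mul_rpow ht b z

lemma laplace_rpow_ofReal {b : ℝ} (hb : -1 < b) {r : ℝ} (hr : 0 < r) :
    laplace (fun t ↦ ((t ^ b : ℝ) : ℂ)) r = Gamma (b + 1) / (r : ℂ) ^ ((b : ℂ) + 1) := by
  have h := integral_cpow_mul_exp_neg_mul_Ioi (a := b + 1) (by simp; linarith) hr
  rw [← ofReal_one, div_cpow_ofReal_nonneg zero_le_one hr.le, ofReal_one, one_cpow] at h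
  rw [div_mul_eq_mul_div, one_mul, add_sub_cancel_right] at h
  rw [laplace, ← h]
  refine setIntegral_congr_fun measurableSet_Ioi fun t ht ↦ ?_
  rw [ofReal_cpow (le_of_lt ht), mul_comm]
  ring_nf

lemma tendsto_ofReal_nhdsNE (x : ℝ) : Tendsto ofReal (𝓝[≠] x) (𝓝[≠] (x : ℂ)) :=
  tendsto_nhdsWithin_of_tendsto_nhds_of_eventually_within _
    (continuous_ofReal.continuousWithinAt.tendsto)
    (eventually_nhdsWithin_of_forall fun _ hy ↦ ofReal_injective.ne hy)

lemma laplace_rpow {b : ℝ} (hb : -1 < b) {s : ℂ} (hs : 0 < s.re) :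
    laplace (fun t ↦ ((t ^ b : ℝ) : ℂ)) s = Gamma (b + 1) / s ^ ((b : ℂ) + 1) := by
  have hU : IsOpen {s : ℂ | 0 < s.re} := isOpen_lt continuous_const continuous_re
  have hG : DifferentiableOn ℂ (fun s : ℂ ↦ Gamma (b + 1) / s ^ ((b : ℂ) + 1)) {s | 0 < s.re} :=
    fun z hz ↦ ((differentiableAt_const _).div (differentiableAt_id.cpow_const (Or.inl hz))
      (cpow_ne_zero_iff.2 (Or.inl (ne_zero_of_re_pos hz)))).differentiableWithinAt
  have hfreq : ∃ᶠ z in 𝓝[≠] (1 : ℂ),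
      laplace (fun t ↦ ((t ^ b : ℝ) : ℂ)) z = Gamma (b + 1) / z ^ ((b : ℂ) + 1) := by
    refine (tendsto_ofReal_nhdsNE 1).frequently (Eventually.frequently ?_)
    filter_upwards [eventually_nhdsWithin_of_eventually_nhds (lt_mem_nhds one_pos)] with r hr
    exact laplace_rpow_ofReal hb hr
  exact ((differentiableOn_laplace_rpow hb).analyticOnNhd hU).eqOn_of_preconnected_of_frequently_eq
    (hG.analyticOnNhd hU) (convex_halfSpace_re_gt 0).isPreconnected (by simp) hfreq hs

lemma integral_norm_cexp_neg_mul_mul_rpow {b : ℝ} (hb : -1 < b) {s : ℂ} (hs : 0 < s.re) :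
    ∫ t in Ioi (0 : ℝ), ‖cexp (-s * t) * ((t ^ b : ℝ) : ℂ)‖ =
      Real.Gamma (b + 1) / s.re ^ (b + 1) := by
  have h := Real.integral_rpow_mul_exp_neg_mul_Ioi (a := b + 1) (by linarith) hs
  rw [add_sub_cancel_right, Real.div_rpow zero_le_one hs.le, Real.one_rpow, div_mul_eq_mul_div,
    one_mul] at h
  rw [← h]
  refine setIntegral_congr_fun measurableSet_Ioi fun t ht ↦ ?_
  rw [norm_cexp_neg_mul_mul_rpow s (le_of_lt ht), mul_comm, neg_mul]

lemma laplace_tsum_mul_rpow {c : ℕ → ℂ} {b : ℕ → ℝ} (hb : ∀ n, -1 < b n) {s : ℂ} (hs : 0 < s.re)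
    (hsum : Summable fun n ↦ ‖c n‖ * (Real.Gamma (b n + 1) / s.re ^ (b n + 1))) :
    laplace (fun t ↦ ∑' n, c n * ((t ^ b n : ℝ) : ℂ)) s =
      ∑' n, c n * (Gamma (b n + 1) / s ^ ((b n : ℂ) + 1)) := by
  have hint (n : ℕ) := (integrableOn_cexp_neg_mul_mul_rpow (hb n) hs).const_mul (c n)
  have hnorm (n : ℕ) : ∫ t in Ioi (0 : ℝ), ‖c n * (cexp (-s * t) * ((t ^ b n : ℝ) : ℂ))‖ =
      ‖c n‖ * (Real.Gamma (b n + 1) / s.re ^ (b n + 1)) := by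
    simp_rw [norm_mul (c n)]
    rw [integral_const_mul, integral_norm_cexp_neg_mul_mul_rpow (hb n) hs]
  simp_rw [← laplace_rpow (hb _) hs, laplace, ← integral_const_mul, ← tsum_mul_left]
  rw [integral_tsum_of_summable_integral_norm hint (by simpa only [hnorm] using hsum)]
  congr 1 with t
  exact tsum_congr fun n ↦ by ring

lemma mittagLeffler_mul_rpow (α : ℝ) (lam : ℂ) {t : ℝ} (ht : 0 ≤ t) :
    mittagLeffler α (lam * ((t ^ α : ℝ) : ℂ)) =
      ∑' n : ℕ, lam ^ n / Gamma (α * n + 1) * ((t ^ (α * n) : ℝ) : ℂ) := by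
  refine tsum_congr fun n ↦ ?_
  rw [mul_pow, ← ofReal_pow, ← Real.rpow_mul_natCast ht]
  ring

lemma norm_Gamma_mul_natCast_add_one {α : ℝ} (hα : 0 ≤ α) (n : ℕ) :
    ‖Gamma (α * n + 1)‖ = Real.Gamma (α * n + 1) := by
  have hpos : 0 < Real.Gamma (α * n + 1) := Real.Gamma_pos_of_pos (by positivity)
  rw [← abs_of_pos hpos, ← Real.norm_eq_abs, ← norm_real, ← Gamma_ofReal]
  push_cast
  rfl

lemma summable_norm_mittagLeffler_coeff_mul {α : ℝ} (hα : 0 ≤ α) {lam : ℂ} {σ : ℝ} (hσ : 0 < σ)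
    (hlam : ‖lam‖ < σ ^ α) :
    Summable fun n : ℕ ↦
      ‖lam ^ n / Gamma (α * n + 1)‖ * (Real.Gamma (α * n + 1) / σ ^ (α * n + 1)) := by
  have hq : ‖lam‖ / σ ^ α < 1 := (div_lt_one (by positivity)).2 hlam
  refine ((summable_geometric_of_lt_one (by positivity) hq).mul_right σ⁻¹).congr fun n ↦ ?_
  rw [norm_div, norm_pow, norm_Gamma_mul_natCast_add_one hα, Real.rpow_add_one hσ.ne',
    Real.rpow_mul_natCast hσ.le, div_pow]
  field_simp

lemma norm_div_cpow_lt_one {α : ℝ} (hα : 0 ≤ α) {s lam : ℂ} (hs : 0 < s.re)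
    (hlam : ‖lam‖ < s.re ^ α) : ‖lam / s ^ (α : ℂ)‖ < 1 := by
  have hre : s.re ^ α ≤ ‖s‖ ^ α := Real.rpow_le_rpow hs.le (re_le_norm s) hα
  have := norm_nonneg lam
  rw [norm_div, norm_cpow_real, div_lt_one (by linarith)]
  linarith

lemma pow_div_Gamma_mul_Gamma_div_cpow {α : ℝ} (hα : 0 ≤ α) {s : ℂ} (hs : s ≠ 0) (lam : ℂ)
    (n : ℕ) :
    lam ^ n / Gamma (α * n + 1) * (Gamma ((α * n : ℝ) + 1) / s ^ (((α * n : ℝ) : ℂ) + 1)) =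
      (lam / s ^ (α : ℂ)) ^ n * s⁻¹ := by
  have hΓ : Gamma (α * n + 1) ≠ 0 := Gamma_ne_zero_of_re_pos (by simp; positivity)
  push_cast
  rw [cpow_add _ _ hs, cpow_one, cpow_mul_nat, div_pow]
  field_simp

/-- For `Re s > 0`, `α > 0`, and `|λ| < (Re s)^α`, the Laplace transform of
`t ↦ E_α(λ t^α)` equals `s^(α-1)/(s^α − λ)`. -/
theorem laplace_mittagLeffler (α : ℝ) (hα : 0 < α) (s : ℂ) (hs : 0 < s.re)
    (lam : ℂ) (hlam : ‖lam‖ < s.re ^ α) :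
    ∫ t in Set.Ioi (0:ℝ),
        Complex.exp (-s * t) * mittagLeffler α (lam * ((t ^ α : ℝ) : ℂ)) =
      s ^ ((α : ℂ) - 1) / (s ^ (α : ℂ) - lam) := by
  have hs0 : s ≠ 0 := ne_zero_of_re_pos hs
  have hsα : s ^ (α : ℂ) ≠ 0 := cpow_ne_zero_iff.2 (Or.inl hs0)
  have hw := norm_div_cpow_lt_one hα.le hs hlam
  have hden : s ^ (α : ℂ) - lam ≠ 0 := by
    intro h
    rw [← sub_eq_zero.1 h, div_self hsα, norm_one] at hw
    exact lt_irrefl _ hw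
  calc _ = laplace (fun t ↦ ∑' n : ℕ, lam ^ n / Gamma (α * n + 1) * ((t ^ (α * n) : ℝ) : ℂ)) s :=
        setIntegral_congr_fun measurableSet_Ioi fun t ht ↦ by
          rw [mittagLeffler_mul_rpow α lam (le_of_lt ht)]
    _ = ∑' n : ℕ, (lam / s ^ (α : ℂ)) ^ n * s⁻¹ := by
        rw [laplace_tsum_mul_rpow (fun n ↦ by nlinarith [n.cast_nonneg (α := ℝ)]) hs
          (summable_norm_mittagLeffler_coeff_mul hα.le hs hlam)]
        exact tsum_congr (pow_div_Gamma_mul_Gamma_div_cpow hα.le hs0 lam)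
    _ = (1 - lam / s ^ (α : ℂ))⁻¹ * s⁻¹ := by
        rw [tsum_mul_right, tsum_geometric_of_norm_lt_one hw]
    _ = s ^ ((α : ℂ) - 1) / (s ^ (α : ℂ) - lam) := by
        rw [cpow_sub _ _ hs0, cpow_one]
        field_simp
end
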